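/- arXiv:2402.17674 — 3 statements merged into one kernel-verified Lean document; each statement's English description precedes it below -/
import Mathlib

section
/- Indices stored in cells of the CRQ circular array are monotonically non-decreasing over time: every CAS transition of CRQ (enqueue transition, dequeue transition, empty transition, unsafe transition) either preserves or strictly increases the index field of the affected cell; hence if a cell holds index idx at some point, it holds an index ≥ idx at all later points. -/
/-- One CAS transition of CRQ on a single cell of the circular array of size `R`.
A cell state is `(s, idx, val)`. -/
inductive CrqStep (Item : Type) (R : ℕ) :
    Bool × ℕ × Option Item → Bool × ℕ × Option Item → Prop
  | enq (s : Bool) (i t : ℕ) (x : Item) (h : i ≤ t) :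
      CrqStep Item R (s, i, none) (true, t, some x)
  | deq (s : Bool) (t : ℕ) (v : Item) :
      CrqStep Item R (s, t, some v) (s, t + R, none)
  | empty (s : Bool) (i t : ℕ) (h : i ≤ t) :
      CrqStep Item R (s, i, none) (s, t + R, none)
  | unsafeT (s : Bool) (i : ℕ) (v : Item) :
      CrqStep Item R (s, i, some v) (false, i, some v)

/-- indices stored in CRQ cells are monotonically non-decreasing:
every transition preserves or increases the index field, hence along any sequence
of transitions the index never decreases. -/
theorem crq_index_monotone {Item : Type} (R : ℕ) (hR : 0 < R)
    (c c' : Bool × ℕ × Option Item)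
    (h : Relation.ReflTransGen (CrqStep Item R) c c') :
    c.2.1 ≤ c'.2.1 := by
  induction h with
  | refl => exact le_refl _
  | tail _ hstep ih =>
    refine ih.trans ?_
    cases hstep with
    | enq s i t x h => exact h
    | deq s t v => exact Nat.le_add_right _ _
    | empty s i t h => exact h.trans (Nat.le_add_right _ _)
    | unsafeT s i v => exact le_refl _
end

section
/- Lemma (persisted dequeue forces recovered Head past its index): if a dequeue read value i in Head and is persisted — meaning either a value > i of Head was written back, or some cell of Q stores (and NVM holds) an index ≥ i + R — then the recovered value of Head computed by PCRQ's recovery function is strictly greater than i. -/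
/-!
Every unoccupied cell whose index is at least `R` bounds the recovered Head from below by its
index minus `R`, plus one: either that value already lies below the persisted Head, or the cell
passes the recovery filter (the scan maximum `t` exceeds it), so it enters the supremum. A
persisted dequeue of `i` supplies such a cell with index `≥ i + R`, unless the persisted Head
itself is already past `i`.
-/

/-- A cell of `q` is `(safe bit, index, value)`, unoccupied when its value is `none`. -/
def recoveredHead {Item : Type} (R t persistedHead : ℕ) (q : Fin R → Bool × ℕ × Option Item) :
    ℕ :=
  max persistedHead
    ((Finset.univ.filter fun j : Fin R => ¬ (q j).2.2.isSome ∧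
        persistedHead ≤ (q j).2.1 - R ∧ (q j).2.1 - R < t).sup
      fun j => (q j).2.1 - R + 1)

section

variable {Item : Type} {R t persistedHead : ℕ} {q : Fin R → Bool × ℕ × Option Item}

theorem persistedHead_le_recoveredHead : persistedHead ≤ recoveredHead R t persistedHead q :=
  le_max_left _ _

theorem sub_lt_recoveredHead_of_unoccupied
    (ht : ∀ j : Fin R, ¬ (q j).2.2.isSome → R ≤ (q j).2.1 → (q j).2.1 - R + 1 ≤ t)
    {j : Fin R} (hj : (q j).2.2 = none) (hR : R ≤ (q j).2.1) :
    (q j).2.1 - R < recoveredHead R t persistedHead q := by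
  have hfree : ¬ (q j).2.2.isSome := by simp [hj]
  by_cases hp : persistedHead ≤ (q j).2.1 - R
  · have hmem : j ∈ Finset.univ.filter fun j : Fin R => ¬ (q j).2.2.isSome ∧
        persistedHead ≤ (q j).2.1 - R ∧ (q j).2.1 - R < t :=
      Finset.mem_filter.2 ⟨Finset.mem_univ j, hfree, hp, ht j hfree hR⟩
    exact Nat.lt_succ_self _ |>.trans_le <|
      (Finset.le_sup (f := fun j => (q j).2.1 - R + 1) hmem).trans (le_max_right _ _)
  · exact (not_le.1 hp).trans_le persistedHead_le_recoveredHead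

end

/-- a persisted dequeue forces the recovered Head past its index:
if a dequeue read `i` in Head and is persisted — either some value `> i` of Head
was written back, or some cell of Q holds a persisted index `≥ i + R` — then the
recovered value of Head computed by PCRQ's recovery is strictly greater than `i`. -/
theorem pcrq_recovered_head_past_persisted_dequeue {Item : Type} (R i t : ℕ)
    (persistedHead : ℕ) (q : Fin R → Bool × ℕ × Option Item)
    (ht : ∀ j : Fin R, ¬ (q j).2.2.isSome → R ≤ (q j).2.1 → (q j).2.1 - R + 1 ≤ t)
    (head₁ : ℕ)
    (hhead₁ : head₁ = max persistedHead
      ((Finset.univ.filter fun j : Fin R => ¬ (q j).2.2.isSome ∧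
          persistedHead ≤ (q j).2.1 - R ∧ (q j).2.1 - R < t).sup
        fun j => (q j).2.1 - R + 1))
    (hpers : persistedHead > i ∨
      ∃ j : Fin R, (q j).2.2 = none ∧ i + R ≤ (q j).2.1) :
    head₁ > i := by
  change head₁ = recoveredHead R t persistedHead q at hhead₁
  subst hhead₁
  rcases hpers with hhead | ⟨j, hj, hidx⟩
  · exact hhead.trans_le persistedHead_le_recoveredHead
  · have hR : R ≤ (q j).2.1 := le_of_add_le_right hidx
    exact (Nat.le_sub_of_add_le hidx).trans_lt (sub_lt_recoveredHead_of_unoccupied ht hj hR)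
end

section
/- Lemma (persisted dequeue forces recovered Tail past its index): under the same hypotheses — a dequeue with index i is persisted, i.e., either persistedHead > i or some cell stores a persisted index ≥ i + R — the recovered value of Tail computed by PCRQ's recovery function is strictly greater than i. -/
/-- a persisted dequeue forces the recovered Tail past its index:
if a dequeue with index `i` is persisted — either the persisted head exceeds `i`,
or some cell holds a persisted index `≥ i + R` — then the recovered Tail computed
by PCRQ's recovery is strictly greater than `i`. -/
theorem pcrq_recovered_tail_past_persisted_dequeue {Item : Type} (R i : ℕ)
    (persistedHead recoveredHead pt t₀ t : ℕ)
    (q : Fin R → Bool × ℕ × Option Item)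
    (ht₀ : t₀ = Finset.univ.sup fun j : Fin R =>
      if (q j).2.2.isSome then (q j).2.1 + 1
      else if R ≤ (q j).2.1 then (q j).2.1 - R + 1
      else pt)
    (hrh : persistedHead ≤ recoveredHead)
    (ht : t = max t₀ recoveredHead)
    (hpers : persistedHead > i ∨
      ∃ j : Fin R, (q j).2.2 = none ∧ i + R ≤ (q j).2.1) :
    t > i := by
  rcases hpers with h | ⟨j, hnone, hidx⟩
  · have : i < recoveredHead := lt_of_lt_of_le h hrh
    omega
  · have hR : R ≤ (q j).2.1 := le_trans (Nat.le_add_left _ _) hidx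
    have hsup : (if (q j).2.2.isSome then (q j).2.1 + 1
        else if R ≤ (q j).2.1 then (q j).2.1 - R + 1 else pt) ≤ t₀ := by
      rw [ht₀]; exact Finset.le_sup (f := fun j : Fin R => if (q j).2.2.isSome then (q j).2.1 + 1 else if R ≤ (q j).2.1 then (q j).2.1 - R + 1 else pt) (Finset.mem_univ j)
    rw [hnone] at hsup
    simp only [Option.isSome_none, Bool.false_eq_true, if_false, if_pos hR] at hsup
    omega
end
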